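/- Let X be a T₃ space such that the hyperspace CL(X) with the Vietoris topology is developable (or more generally has a Gδ-diagonal and X is countably compact). If CL(X) is perfect and X is countably compact, then X is compact and metrizable. -/

import Mathlib

open Set TopologicalSpace

/-- The hyperspace of nonempty closed subsets of `X`. -/
def CL (X : Type*) [TopologicalSpace X] : Type _ :=
  {A : Set X // A.Nonempty ∧ IsClosed A}

/-- The Vietoris topology on `CL X`. -/
instance CL.instTopologicalSpace (X : Type*) [TopologicalSpace X] :
    TopologicalSpace (CL X) :=
  .generateFrom
    ({S | ∃ U : Set X, IsOpen U ∧ S = {K : CL X | K.1 ⊆ U}} ∪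
     {S | ∃ U : Set X, IsOpen U ∧ S = {K : CL X | (K.1 ∩ U).Nonempty}})

/-!
The map `(x, y) ↦ {x, y}` into `CL X` pulls the closed set of subsingletons back to the diagonal,
so perfectness of `CL X` makes the diagonal a `Gδ`, say `⋂ n, W n`.

Such a space is compact as soon as it is countably compact (Chaber). Given a filter `l` with a
basis of closed sets, Zorn gives a maximal family of balls `ball x (W n)`, no two of which contain
each other's centres, whose complements are compatible with `l`. Countable compactness makes each
level of the family finite, so the family is countable; hence some point `x` avoids all its balls.
By maximality every ball around `x` belongs to the filter, and countable compactness once more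
makes `x` a cluster point of `l`.

Finally, in a compact Hausdorff space with a `Gδ` diagonal the uniformity is countably generated,
so the space is metrizable.
-/

section

open Filter Topology UniformSpace

variable {X : Type*}

namespace CL

variable [TopologicalSpace X]

theorem isOpen_setOf_inter_nonempty {U : Set X} (hU : IsOpen U) :
    IsOpen {K : CL X | (K.1 ∩ U).Nonempty} :=
  isOpen_generateFrom_of_mem (Or.inr ⟨U, hU, rfl⟩)

theorem isClosed_setOf_subsingleton [T2Space X] : IsClosed {K : CL X | K.1.Subsingleton} := by
  refine isOpen_compl_iff.1 (isOpen_iff_forall_mem_open.2 fun K hK => ?_)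
  obtain ⟨x, hx, y, hy, hxy⟩ := not_subsingleton_iff.1 hK
  obtain ⟨U, V, hU, hV, hxU, hyV, hUV⟩ := t2_separation hxy
  refine ⟨{L | (L.1 ∩ U).Nonempty} ∩ {L | (L.1 ∩ V).Nonempty}, ?_,
    (isOpen_setOf_inter_nonempty hU).inter (isOpen_setOf_inter_nonempty hV),
    ⟨x, hx, hxU⟩, ⟨y, hy, hyV⟩⟩
  rintro L ⟨⟨a, haL, haU⟩, ⟨b, hbL, hbV⟩⟩ hL
  exact hUV.ne_of_mem haU hbV (hL haL hbL)

def pair [T1Space X] (p : X × X) : CL X :=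
  ⟨{p.1, p.2}, insert_nonempty _ _, (toFinite _).isClosed⟩

theorem continuous_pair [T1Space X] : Continuous (pair (X := X)) := by
  refine continuous_generateFrom_iff.2 ?_
  rintro s (⟨U, hU, rfl⟩ | ⟨U, hU, rfl⟩)
  · have : pair ⁻¹' {K : CL X | K.1 ⊆ U} = U ×ˢ U := by
      ext p
      simp [pair, insert_subset_iff]
    exact this ▸ hU.prod hU
  · have : pair ⁻¹' {K : CL X | (K.1 ∩ U).Nonempty} = U ×ˢ univ ∪ univ ×ˢ U := by
      ext p
      simp [pair, inter_nonempty]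
    exact this ▸ (hU.prod isOpen_univ).union (isOpen_univ.prod hU)

theorem pair_preimage_setOf_subsingleton [T1Space X] :
    pair ⁻¹' {K : CL X | K.1.Subsingleton} = diagonal X := by
  ext ⟨x, y⟩
  refine ⟨fun h => h (mem_insert x _) (mem_insert_of_mem x rfl), ?_⟩
  rintro (rfl : x = y)
  simp [pair]

theorem isGδ_diagonal_of_perfect [T2Space X] (hperf : ∀ C : Set (CL X), IsClosed C → IsGδ C) :
    IsGδ (diagonal X) :=
  pair_preimage_setOf_subsingleton (X := X) ▸
    (hperf _ isClosed_setOf_subsingleton).preimage continuous_pair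

end CL

namespace Filter

variable [TopologicalSpace X]

def HasClosedBasis (l : Filter X) : Prop :=
  ∀ s ∈ l, ∃ t ∈ l, IsClosed t ∧ t ⊆ s

theorem hasClosedBasis_lift'_closure (f : Filter X) : (f.lift' closure).HasClosedBasis := by
  intro s hs
  obtain ⟨t, ht, hts⟩ := (mem_lift'_sets (monotone_closure X)).1 hs
  exact ⟨closure t, mem_lift' ht, isClosed_closure, hts⟩

theorem HasClosedBasis.inf {l m : Filter X} (hl : l.HasClosedBasis) (hm : m.HasClosedBasis) :
    (l ⊓ m).HasClosedBasis := by
  intro s hs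
  obtain ⟨a, ha, b, hb, hab⟩ := mem_inf_iff_superset.1 hs
  obtain ⟨a', ha', ha'c, ha'a⟩ := hl a ha
  obtain ⟨b', hb', hb'c, hb'b⟩ := hm b hb
  exact ⟨a' ∩ b', inter_mem_inf ha' hb', ha'c.inter hb'c,
    (inter_subset_inter ha'a hb'b).trans hab⟩

theorem hasClosedBasis_biInf_principal {ι : Type*} {C : ι → Set X} (hC : ∀ i, IsClosed (C i))
    (s : Set ι) : (⨅ i ∈ s, 𝓟 (C i)).HasClosedBasis := by
  intro t ht
  obtain ⟨I, hIfin, hIs, hIt⟩ := mem_biInf_principal.1 ht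
  exact ⟨⋂ i ∈ I, C i, mem_biInf_principal.2 ⟨I, hIfin, hIs, subset_rfl⟩,
    isClosed_biInter fun i _ => hC i, hIt⟩

theorem HasClosedBasis.nonempty_iInter [CountablyCompactSpace X] {l : Filter X} [NeBot l]
    (hl : l.HasClosedBasis) {ι : Type*} [Countable ι] {s : ι → Set X} (hs : ∀ i, s i ∈ l) :
    (⋂ i, s i).Nonempty := by
  choose t htl htc hts using fun i => hl (s i) (hs i)
  set g := ⨅ i, 𝓟 (t i)
  have : NeBot g := NeBot.mono ‹_› (le_iInf fun i => le_principal_iff.2 (htl i))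
  obtain ⟨y, -, hy⟩ :=
    CountablyCompactSpace.isCountablyCompact_univ (f := g) (le_principal_iff.2 univ_mem)
  refine ⟨y, mem_iInter.2 fun i => hts i ?_⟩
  rw [← (htc i).closure_eq]
  exact clusterPt_iff_forall_mem_closure.1 hy _ (mem_iInf_of_mem i (mem_principal_self _))

end Filter

section CountablyCompact

variable [TopologicalSpace X] [CountablyCompactSpace X]

theorem finite_of_pairwise_notMem_nhdsSet_diagonal {V : Set (X × X)}
    (hV : V ∈ 𝓝ˢ (diagonal X)) {s : Set X}
    (hs : s.Pairwise fun a b => (a, b) ∉ V ∨ (b, a) ∉ V) : s.Finite := by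
  by_contra hinf
  let u : ℕ ↪ s := Set.Infinite.natEmbedding s hinf
  obtain ⟨z, -, hz⟩ := isCountablyCompact_iff_seq_clusterPt.1
    CountablyCompactSpace.isCountablyCompact_univ (fun n => (u n : X)) (.of_forall fun _ => trivial)
  obtain ⟨a, ha, b, hb, hab⟩ := mem_nhds_prod_iff.1 (mem_nhdsSet_iff_forall.1 hV (z, z) rfl)
  have hfreq : ∃ᶠ n in atTop, (u n : X) ∈ a ∩ b :=
    mapClusterPt_iff_frequently.1 hz _ (inter_mem ha hb)
  obtain ⟨m, hm⟩ := hfreq.exists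
  obtain ⟨k, hmk, hk⟩ := frequently_atTop.1 hfreq (m + 1)
  have hne : (u m : X) ≠ u k := fun h => by
    have := u.injective (Subtype.ext h)
    omega
  rcases hs (u m).2 (u k).2 hne with h | h
  · exact h (hab ⟨hm.1, hk.2⟩)
  · exact h (hab ⟨hk.1, hm.2⟩)

theorem countable_of_pairwise_notMem_ball {W : ℕ → Set (X × X)}
    (hW : ∀ n, W n ∈ 𝓝ˢ (diagonal X)) {A : Set (X × ℕ)}
    (hA : A.Pairwise fun p q => p.1 ∉ ball q.1 (W q.2) ∨ q.1 ∉ ball p.1 (W p.2)) :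
    A.Countable := by
  have hfin : ∀ n, {x | (x, n) ∈ A}.Finite := fun n =>
    finite_of_pairwise_notMem_nhdsSet_diagonal (hW n) fun a ha b hb hab =>
      (hA ha hb (by simpa using hab)).symm
  refine (countable_iUnion fun n => ((hfin n).image (·, n)).countable).mono ?_
  rintro ⟨x, n⟩ hx
  exact mem_iUnion.2 ⟨n, x, hx, rfl⟩

end CountablyCompact

section Admissible

variable (l : Filter X) (W : ℕ → Set (X × X))

def IsAdmissibleBalls (A : Set (X × ℕ)) : Prop :=
  A.Pairwise (fun p q => p.1 ∉ ball q.1 (W q.2) ∨ q.1 ∉ ball p.1 (W p.2)) ∧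
    (l ⊓ ⨅ p ∈ A, 𝓟 (ball p.1 (W p.2))ᶜ).NeBot

variable {l W}

theorem IsAdmissibleBalls.sUnion {c : Set (Set (X × ℕ))}
    (hc : ∀ A ∈ c, IsAdmissibleBalls l W A) (hchain : IsChain (· ⊆ ·) c)
    (hne : c.Nonempty) : IsAdmissibleBalls l W (⋃₀ c) := by
  refine ⟨(pairwise_sUnion hchain.directedOn).2 fun A hA => (hc A hA).1, ?_⟩
  have : Nonempty c := hne.to_subtype
  rw [iInf_sUnion, iInf_subtype', inf_iInf]
  refine iInf_neBot_of_directed' (fun A B => ?_) fun A => (hc A A.2).2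
  obtain ⟨C, hC, hAC, hBC⟩ := hchain.directedOn A A.2 B B.2
  exact ⟨⟨C, hC⟩, inf_le_inf_left _ (biInf_mono fun p hp => hAC hp),
    inf_le_inf_left _ (biInf_mono fun p hp => hBC hp)⟩

theorem exists_maximal_isAdmissibleBalls [NeBot l] : ∃ M, Maximal (IsAdmissibleBalls l W) M := by
  obtain ⟨M, -, hM⟩ := zorn_subset_nonempty {A | IsAdmissibleBalls l W A}
    (fun c hc hchain hne => ⟨⋃₀ c, IsAdmissibleBalls.sUnion hc hchain hne,
      fun _ => subset_sUnion_of_mem⟩) ∅ ⟨pairwise_empty _, by simpa⟩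
  exact ⟨M, hM⟩

theorem ball_mem_of_maximal_isAdmissibleBalls (hWΔ : ∀ n, diagonal X ⊆ W n)
    {M : Set (X × ℕ)} (hM : Maximal (IsAdmissibleBalls l W) M) {x : X}
    (hx : ∀ p ∈ M, x ∉ ball p.1 (W p.2)) (n : ℕ) :
    ball x (W n) ∈ l ⊓ ⨅ p ∈ M, 𝓟 (ball p.1 (W p.2))ᶜ := by
  have hxn : (x, n) ∉ M := fun h => hx _ h (hWΔ n rfl)
  have hpw := hM.prop.1.insert (a := (x, n)) fun q hq _ => ⟨Or.inl (hx q hq), Or.inr (hx q hq)⟩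
  have hbot : ¬ (l ⊓ ⨅ p ∈ insert (x, n) M, 𝓟 (ball p.1 (W p.2))ᶜ).NeBot := fun h =>
    hxn (hM.mem_of_prop_insert ⟨hpw, h⟩)
  rw [not_neBot, iInf_insert, inf_left_comm, inf_comm] at hbot
  exact mem_iff_inf_principal_compl.2 hbot

variable [TopologicalSpace X] [CountablyCompactSpace X]

theorem exists_clusterPt_of_maximal_isAdmissibleBalls (hWo : ∀ n, IsOpen (W n))
    (hW : diagonal X = ⋂ n, W n) (hl : l.HasClosedBasis) {M : Set (X × ℕ)}
    (hM : Maximal (IsAdmissibleBalls l W) M) (hMc : M.Countable) : ∃ x, ClusterPt x l := by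
  set m := l ⊓ ⨅ p ∈ M, 𝓟 (ball p.1 (W p.2))ᶜ
  have : NeBot m := hM.prop.2
  have hm : m.HasClosedBasis := hl.inf <| hasClosedBasis_biInf_principal
    (C := fun p : X × ℕ => (ball p.1 (W p.2))ᶜ)
    (fun p => ((hWo p.2).preimage (Continuous.prodMk_right p.1)).isClosed_compl) M
  have := hMc.to_subtype
  obtain ⟨x, hx⟩ := hm.nonempty_iInter (s := fun p : M => (ball p.1.1 (W p.1.2))ᶜ) fun p =>
    mem_inf_of_right <|
      biInf_le (fun p : X × ℕ => 𝓟 (ball p.1 (W p.2))ᶜ) p.2 (mem_principal_self _)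
  have hball := ball_mem_of_maximal_isAdmissibleBalls (fun n => hW.le.trans (iInter_subset W n))
    hM fun p hp => mem_iInter.1 hx ⟨p, hp⟩
  -- a point of `closure F` in every ball around `x` is `x` itself
  refine ⟨x, clusterPt_iff_forall_mem_closure.2 fun F hF => ?_⟩
  obtain ⟨y, hy⟩ := hm.nonempty_iInter (s := fun n => closure F ∩ ball x (W n))
    fun n => inter_mem (mem_inf_of_left (mem_of_superset hF subset_closure)) (hball n)
  have hxy : x = y := mem_diagonal_iff.1 <| hW.ge (mem_iInter.2 fun n => (mem_iInter.1 hy n).2)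
  exact hxy ▸ (mem_iInter.1 hy 0).1

end Admissible

theorem Filter.HasClosedBasis.exists_clusterPt [TopologicalSpace X] [CountablyCompactSpace X]
    (hΔ : IsGδ (diagonal X)) {l : Filter X} [NeBot l] (hl : l.HasClosedBasis) :
    ∃ x, ClusterPt x l := by
  obtain ⟨W, hWo, hW⟩ := isGδ_iff_eq_iInter_nat.1 hΔ
  obtain ⟨M, hM⟩ := exists_maximal_isAdmissibleBalls (l := l) (W := W)
  refine exists_clusterPt_of_maximal_isAdmissibleBalls hWo hW hl hM ?_
  exact countable_of_pairwise_notMem_ball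
    (fun n => (hWo n).mem_nhdsSet.2 (hW.le.trans (iInter_subset W n))) hM.prop.1

theorem compactSpace_of_isGδ_diagonal [TopologicalSpace X] [CountablyCompactSpace X]
    (hΔ : IsGδ (diagonal X)) : CompactSpace X := by
  refine ⟨fun f _ _ => ?_⟩
  have : NeBot (f.lift' closure) := NeBot.mono ‹_› (le_lift'_closure f)
  obtain ⟨x, hx⟩ := (hasClosedBasis_lift'_closure f).exists_clusterPt hΔ
  exact ⟨x, trivial, clusterPt_lift'_closure_iff.1 hx⟩

theorem IsGδ.isCountablyGenerated_nhdsSet [TopologicalSpace X] [CompactSpace X] [RegularSpace X]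
    {K : Set X} (hKc : IsClosed K) (hK : IsGδ K) : (𝓝ˢ K).IsCountablyGenerated := by
  obtain ⟨W, hWo, rfl⟩ := isGδ_iff_eq_iInter_nat.1 hK
  have hKW : ∀ n, W n ∈ 𝓝ˢ (⋂ n, W n) := fun n =>
    (hWo n).mem_nhdsSet.2 (iInter_subset W n)
  choose V hVo hKV hVW using fun n => hKc.isCompact.exists_isOpen_closure_subset (hKW n)
  set g := ⨅ n, 𝓟 (closure (V n))
  suffices 𝓝ˢ (⋂ n, W n) = g by rw [this]; infer_instance
  refine le_antisymm (le_iInf fun n => le_principal_iff.2 ?_) fun U hU => ?_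
  · exact mem_of_superset ((hVo n).mem_nhdsSet.2 (hKV n)) subset_closure
  -- a cluster point of `g` outside `interior U` would lie in `⋂ n, W n`
  rw [← subset_interior_iff_mem_nhdsSet] at hU
  refine mem_of_superset (mem_iff_inf_principal_compl.2 ?_) interior_subset
  by_contra hne
  have := neBot_iff.2 hne
  obtain ⟨y, hy⟩ := exists_clusterPt_of_compactSpace (g ⊓ 𝓟 (interior U)ᶜ)
  have hmem : ∀ s ∈ g ⊓ 𝓟 (interior U)ᶜ, IsClosed s → y ∈ s :=
    fun s hs hsc => hsc.closure_eq ▸ clusterPt_iff_forall_mem_closure.1 hy s hs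
  refine hmem _ (mem_inf_of_right (mem_principal_self _)) isOpen_interior.isClosed_compl (hU ?_)
  exact mem_iInter.2 fun n => hVW n <|
    hmem _ (mem_inf_of_left (mem_iInf_of_mem n (mem_principal_self _))) isClosed_closure

theorem metrizableSpace_of_isGδ_diagonal [TopologicalSpace X] [CompactSpace X] [T2Space X]
    (hΔ : IsGδ (diagonal X)) : MetrizableSpace X := by
  let := uniformSpaceOfCompactR1 (γ := X)
  have : (uniformity X).IsCountablyGenerated :=
    nhdsSet_diagonal_eq_uniformity (α := X) ▸ hΔ.isCountablyGenerated_nhdsSet isClosed_diagonal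
  exact UniformSpace.metrizableSpace

end

/-- If `X` is a `T₃` space which is countably compact and whose Vietoris
hyperspace is perfect (every closed set is a `Gδ`), then `X` is compact and
metrizable. -/
theorem compact_metrizable_of_perfect_hyperspace {X : Type*} [TopologicalSpace X]
    [T3Space X] (hperf : ∀ C : Set (CL X), IsClosed C → IsGδ C)
    (hcc : ∀ U : ℕ → Set X, (∀ n, IsOpen (U n)) → (⋃ n, U n) = Set.univ →
      ∃ t : Finset ℕ, (⋃ n ∈ t, U n) = Set.univ) :
    CompactSpace X ∧ TopologicalSpace.MetrizableSpace X := by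
  have : CountablyCompactSpace X := ⟨isCountablyCompact_iff_countable_open_cover.2
    fun U hUo hU => (hcc U hUo (univ_subset_iff.1 hU)).imp fun _ ht => ht.ge⟩
  have hΔ : IsGδ (diagonal X) := CL.isGδ_diagonal_of_perfect hperf
  have : CompactSpace X := compactSpace_of_isGδ_diagonal hΔ
  exact ⟨this, metrizableSpace_of_isGδ_diagonal hΔ⟩
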